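/- arXiv:1909.08123 — 2 statements merged into one kernel-verified Lean document; each statement's English description precedes it below -/
import Mathlib

section
/- Let G ⊆ (𝔽₂)^{2n} be a pairwise anticommuting set. Then no nonempty proper subset H ⊂ G has sum equal to 0. -/
/-- The phase space `(𝔽₂)^{2n}`, modeled as pairs of vectors in `𝔽₂ⁿ`. -/
abbrev V (n : ℕ) := (Fin n → ZMod 2) × (Fin n → ZMod 2)

/-- The standard symplectic bilinear form `ω((a,b),(c,d)) = a·d + b·c`. -/
def sympl {n : ℕ} (P Q : V n) : ZMod 2 :=
  ∑ i, (P.1 i * Q.2 i + P.2 i * Q.1 i)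

/-- A finite set is (pairwise) anticommuting if `ω(P,Q) = 1` for all distinct `P, Q`. -/
def AC {n : ℕ} (G : Finset (V n)) : Prop :=
  ∀ P ∈ G, ∀ Q ∈ G, P ≠ Q → sympl P Q = 1

/-- A maximal pairwise anticommuting set: no strictly larger set is anticommuting. -/
def MaxAC {n : ℕ} (G : Finset (V n)) : Prop :=
  AC G ∧ ∀ H : Finset (V n), G ⊆ H → AC H → H = G

/-!
Pair `∑ H = 0` with an element `R` of `G`. By anticommutation, `ω(∑ H, R)` counts the elements of
`H` other than `R`, modulo 2. Taking `R ∉ H` (possible as `H ≠ G`) shows `|H|` is even, taking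
`R ∈ H` (possible as `H` is nonempty) shows `|H| - 1` is even.
-/

open Finset

section

variable {n : ℕ}

lemma sympl_self (P : V n) : sympl P P = 0 := by
  refine sum_eq_zero fun i _ => ?_
  rw [mul_comm (P.2 i)]
  exact CharTwo.add_self_eq_zero _

lemma sympl_zero_left (R : V n) : sympl 0 R = 0 := by
  simp [sympl]

lemma sympl_sum_left {ι : Type*} (s : Finset ι) (f : ι → V n) (R : V n) :
    sympl (∑ x ∈ s, f x) R = ∑ x ∈ s, sympl (f x) R := by
  unfold sympl
  rw [sum_comm]
  refine sum_congr rfl fun i _ => ?_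
  simp only [Prod.fst_sum, Prod.snd_sum, Finset.sum_apply, sum_mul, sum_add_distrib]

lemma AC.sympl_sum_eq_card_erase {G H : Finset (V n)} (hG : AC G) (hH : H ⊆ G) {R : V n}
    (hR : R ∈ G) : sympl (∑ x ∈ H, x) R = #(H.erase R) := by
  rw [sympl_sum_left, ← sum_erase H (f := (sympl · R)) (sympl_self R), card_eq_sum_ones,
    Nat.cast_sum]
  refine sum_congr rfl fun x hx => ?_
  rw [hG x (hH (mem_of_mem_erase hx)) R hR (ne_of_mem_erase hx), Nat.cast_one]

end

theorem stmt_8 {n : ℕ} (G : Finset (V n)) (hG : AC G) :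
    ∀ H ⊆ G, H.Nonempty → H ≠ G → ∑ x ∈ H, x ≠ (0 : V n) := by
  intro H hHG ⟨P, hP⟩ hHne hsum
  obtain ⟨Q, hQG, hQH⟩ := exists_of_ssubset (ssubset_of_subset_of_ne hHG hHne)
  have hHeven := hG.sympl_sum_eq_card_erase hHG hQG
  have hHpred_even := hG.sympl_sum_eq_card_erase hHG (hHG hP)
  rw [hsum, sympl_zero_left, erase_eq_of_notMem hQH, eq_comm,
    ZMod.natCast_eq_zero_iff] at hHeven
  rw [hsum, sympl_zero_left, card_erase_of_mem hP, eq_comm,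
    ZMod.natCast_eq_zero_iff] at hHpred_even
  have := card_pos.2 ⟨P, hP⟩
  omega
end

section
/- The number of distinct subgroups of (𝔽₂)^{2n} of order 2^m all of whose elements pairwise commute (i.e., totally isotropic subspaces of dimension m of a 2n-dimensional symplectic 𝔽₂-space) equals ∏_{k=0}^{m−1} (4^n/2^k − 2^k)/(2^m − 2^k), for 0 ≤ m ≤ n. -/
/-
Count isotropic frames (linearly independent tuples of pairwise orthogonal vectors) in two
ways. A frame `s` of length `j` extends exactly by the vectors of `s^⊥ \ span s`; since the
form is nondegenerate and alternating, `span s ≤ s^⊥` and `dim s^⊥ = 2n - j`, so there are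
`2^(2n-j) - 2^j` of them. On the other hand, every `k`-dimensional isotropic subspace is
spanned by exactly `∏_{j<k} (2^k - 2^j)` frames. Finally, additive subgroups of `𝔽₂^{2n}`
are its subspaces.
-/

open Module Submodule
open LinearMap (BilinForm)

namespace Submodule

variable {K M : Type*} [Field K] [Fintype K] [AddCommGroup M] [Module K M] [Finite M]

theorem natCard_eq_pow_finrank (W : Submodule K M) : Nat.card W = Fintype.card K ^ finrank K W := by
  have : Fintype W := Fintype.ofFinite W
  rw [Nat.card_eq_fintype_card, card_eq_pow_finrank (K := K)]

theorem natCard_sdiff_of_le {W O : Submodule K M} (h : W ≤ O) :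
    (Nat.card ↥((O : Set M) \ W) : ℚ) =
      (Fintype.card K : ℚ) ^ finrank K O - (Fintype.card K : ℚ) ^ finrank K W := by
  have hsum := Set.ncard_sdiff_add_ncard_of_subset (s := (W : Set M)) (t := O) h
  simp only [← Nat.card_coe_set_eq, SetLike.coe_sort_coe, natCard_eq_pow_finrank] at hsum
  rw [eq_sub_iff_add_eq]
  exact_mod_cast hsum

end Submodule

namespace LinearMap.BilinForm

variable {K M : Type*} [Field K] [AddCommGroup M] [Module K M]

local notation "q" => Fintype.card K

abbrev IsotropicFrame (B : BilinForm K M) (k : ℕ) :=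
  {s : Fin k → M // LinearIndependent K s ∧ ∀ i j, B (s i) (s j) = 0}

abbrev IsotropicSubspace (B : BilinForm K M) (k : ℕ) :=
  {W : Submodule K M // finrank K W = k ∧ W ≤ B.orthogonal W}

variable {B : BilinForm K M}

theorem mem_orthogonal_span_range_iff {ι : Type*} (s : ι → M) (v : M) :
    v ∈ B.orthogonal (span K (Set.range s)) ↔ ∀ i, B (s i) v = 0 := by
  change span K (Set.range s) ≤ LinearMap.ker (B.flip v) ↔ _
  rw [span_le, Set.range_subset_iff]
  rfl

theorem span_range_le_orthogonal_iff {ι : Type*} (s : ι → M) :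
    span K (Set.range s) ≤ B.orthogonal (span K (Set.range s)) ↔
      ∀ i j, B (s i) (s j) = 0 := by
  simp only [span_le, Set.range_subset_iff, SetLike.mem_coe, mem_orthogonal_span_range_iff]
  exact forall_comm

theorem isotropic_finSucc_iff (hB : B.IsAlt) {k : ℕ} (s : Fin (k + 1) → M) :
    (∀ i j, B (s i) (s j) = 0) ↔
      (∀ i j, B (Fin.tail s i) (Fin.tail s j) = 0) ∧
        s 0 ∈ B.orthogonal (span K (Set.range (Fin.tail s))) := by
  rw [mem_orthogonal_span_range_iff]
  simp only [Fin.forall_fin_succ, Fin.tail, hB.self_eq_zero, hB.eq_iff (x := s 0), true_and,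
    forall_and]
  tauto

variable (B) in
def isotropicFrameSuccEquiv (hB : B.IsAlt) (k : ℕ) :
    B.IsotropicFrame (k + 1) ≃ Σ s : B.IsotropicFrame k,
      ↥((B.orthogonal (span K (Set.range s.1)) : Set M) \ span K (Set.range s.1)) where
  toFun s :=
    have hli := linearIndependent_finSucc.1 s.2.1
    have hiso := (isotropic_finSucc_iff hB s.1).1 s.2.2
    ⟨⟨Fin.tail s.1, hli.1, hiso.1⟩, s.1 0, hiso.2, hli.2⟩
  invFun x := ⟨Fin.cons x.2.1 x.1.1, linearIndependent_finCons.2 ⟨x.1.2.1, x.2.2.2⟩,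
    (isotropic_finSucc_iff hB _).2 ⟨by simpa using x.1.2.2, by simpa using x.2.2.1⟩⟩
  left_inv s := Subtype.ext (Fin.cons_self_tail s.1)
  right_inv _ := rfl

theorem natCard_isotropicFrame [Fintype K] [FiniteDimensional K M] (hB : B.IsAlt)
    (hB' : B.Nondegenerate) (k : ℕ) :
    (Nat.card (B.IsotropicFrame k) : ℚ) =
      ∏ j ∈ Finset.range k, ((q : ℚ) ^ (finrank K M - j) - q ^ j) := by
  have : Finite M := Module.finite_of_finite K
  induction k with
  | zero => simp [Nat.card_unique]
  | succ k ih =>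
    have hfiber (s : B.IsotropicFrame k) :
        (Nat.card ↥((B.orthogonal (span K (Set.range s.1)) : Set M) \
          span K (Set.range s.1)) : ℚ) =
          (q : ℚ) ^ (finrank K M - k) - q ^ k := by
      have hW : finrank K (span K (Set.range s.1)) = k := by
        rw [finrank_span_eq_card s.2.1, Fintype.card_fin]
      rw [natCard_sdiff_of_le ((span_range_le_orthogonal_iff s.1).2 s.2.2),
        finrank_orthogonal hB', hW]
    have : Fintype (B.IsotropicFrame k) := Fintype.ofFinite _
    rw [Nat.card_congr (isotropicFrameSuccEquiv B hB k), Nat.card_sigma, Nat.cast_sum,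
      Finset.sum_congr rfl fun s _ => hfiber s, Finset.sum_const, Finset.card_univ,
      ← Nat.card_eq_fintype_card, nsmul_eq_mul, Finset.prod_range_succ, ← ih, mul_comm]

variable (B) in
def spanIsotropicFrame {k : ℕ} (s : B.IsotropicFrame k) : B.IsotropicSubspace k :=
  ⟨span K (Set.range s.1), by rw [finrank_span_eq_card s.2.1, Fintype.card_fin],
    (span_range_le_orthogonal_iff s.1).2 s.2.2⟩

def spanIsotropicFrameFiberEquiv [FiniteDimensional K M] {k : ℕ} (W : B.IsotropicSubspace k) :
    {s : B.IsotropicFrame k // B.spanIsotropicFrame s = W} ≃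
      {b : Fin k → W.1 // LinearIndependent K b} where
  toFun s :=
    ⟨fun i => ⟨s.1.1 i, congrArg Subtype.val s.2 ▸ subset_span (Set.mem_range_self i)⟩,
      .of_comp W.1.subtype s.1.2.1⟩
  invFun b :=
    have hli := b.2.map' W.1.subtype W.1.ker_subtype
    have hspan : span K (Set.range (W.1.subtype ∘ b.1)) = W.1 :=
      eq_of_le_of_finrank_le (span_le.2 <| Set.range_subset_iff.2 fun i => (b.1 i).2)
        (by rw [finrank_span_eq_card hli, Fintype.card_fin, W.2.1])
    ⟨⟨W.1.subtype ∘ b.1, hli,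
        fun i j => mem_orthogonal_iff.1 (W.2.2 (b.1 j).2) _ (b.1 i).2⟩,
      Subtype.ext hspan⟩
  left_inv _ := rfl
  right_inv _ := rfl

theorem natCard_isotropicFrame_eq_mul [Fintype K] [Finite M] (k : ℕ) :
    (Nat.card (B.IsotropicFrame k) : ℚ) =
      Nat.card (B.IsotropicSubspace k) *
        ∏ j ∈ Finset.range k, ((q : ℚ) ^ k - q ^ j) := by
  have hfiber (W : B.IsotropicSubspace k) :
      (Nat.card {s : B.IsotropicFrame k // B.spanIsotropicFrame s = W} : ℚ) =
        ∏ j ∈ Finset.range k, ((q : ℚ) ^ k - q ^ j) := by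
    rw [Nat.card_congr (spanIsotropicFrameFiberEquiv W), card_linearIndependent W.2.1.ge, W.2.1,
      Nat.cast_prod, ← Fin.prod_univ_eq_prod_range]
    refine Finset.prod_congr rfl fun j _ => ?_
    rw [Nat.cast_sub (Nat.pow_le_pow_right Fintype.card_pos j.2.le), Nat.cast_pow, Nat.cast_pow]
  have : Fintype (B.IsotropicSubspace k) := Fintype.ofFinite _
  rw [← Nat.card_congr (Equiv.sigmaFiberEquiv (B.spanIsotropicFrame (k := k))), Nat.card_sigma,
    Nat.cast_sum, Finset.sum_congr rfl fun W _ => hfiber W, Finset.sum_const, Finset.card_univ,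
    ← Nat.card_eq_fintype_card, nsmul_eq_mul]

theorem natCard_isotropicSubspace [Fintype K] [FiniteDimensional K M] (hB : B.IsAlt)
    (hB' : B.Nondegenerate) (k : ℕ) :
    (Nat.card (B.IsotropicSubspace k) : ℚ) =
      ∏ j ∈ Finset.range k, ((q : ℚ) ^ (finrank K M - j) - q ^ j) /
        ((q : ℚ) ^ k - q ^ j) := by
  have : Finite M := Module.finite_of_finite K
  have hne : ∏ j ∈ Finset.range k, ((q : ℚ) ^ k - q ^ j) ≠ 0 :=
    Finset.prod_ne_zero_iff.2 fun j hj => sub_ne_zero.2 <| ne_of_gt <|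
      pow_lt_pow_right₀ (by exact_mod_cast Fintype.one_lt_card) (Finset.mem_range.1 hj)
  rw [Finset.prod_div_distrib, eq_div_iff hne, ← natCard_isotropicFrame hB hB',
    natCard_isotropicFrame_eq_mul]

end LinearMap.BilinForm

def symplForm (n : ℕ) : BilinForm (ZMod 2) (V n) :=
  LinearMap.mk₂ (ZMod 2) sympl
    (fun _ _ _ => by simp only [sympl, ← Finset.sum_add_distrib]; congr! 1; simp; ring)
    (fun _ _ _ => by simp only [sympl, smul_eq_mul, Finset.mul_sum]; congr! 1; simp; ring)
    (fun _ _ _ => by simp only [sympl, ← Finset.sum_add_distrib]; congr! 1; simp; ring)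
    (fun _ _ _ => by simp only [sympl, smul_eq_mul, Finset.mul_sum]; congr! 1; simp; ring)

theorem symplForm_apply {n : ℕ} (P Q : V n) : symplForm n P Q = sympl P Q := rfl

theorem symplForm_isAlt (n : ℕ) : (symplForm n).IsAlt := fun P =>
  show sympl P P = 0 from Finset.sum_eq_zero fun i _ => by
    rw [mul_comm (P.2 i)]
    exact CharTwo.add_self_eq_zero _

theorem symplForm_nondegenerate (n : ℕ) : (symplForm n).Nondegenerate := by
  refine (symplForm_isAlt n).isRefl.nondegenerate_iff_separatingLeft.2 fun P h => ?_
  ext i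
  · simpa [symplForm_apply, sympl, Pi.single_apply] using h (0, Pi.single i 1)
  · simpa [symplForm_apply, sympl, Pi.single_apply] using h (Pi.single i 1, 0)

theorem finrank_V (n : ℕ) : finrank (ZMod 2) (V n) = 2 * n := by
  simp [two_mul]

theorem AddSubgroup.natCard_eq_pow_iff_finrank {p : ℕ} [Fact p.Prime] {G : Type*} [AddCommGroup G]
    [Module (ZMod p) G] [Finite G] (S : AddSubgroup G) (m : ℕ) :
    Nat.card S = p ^ m ↔ finrank (ZMod p) (AddSubgroup.toZModSubmodule p S) = m := by
  change Nat.card (AddSubgroup.toZModSubmodule p S) = _ ↔ _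
  rw [Submodule.natCard_eq_pow_finrank, ZMod.card]
  exact (Nat.pow_right_injective (Fact.out : p.Prime).two_le).eq_iff

theorem stmt_18 {n : ℕ} (m : ℕ) (hm : m ≤ n) :
    (Nat.card {S : AddSubgroup (V n) //
        Nat.card S = 2 ^ m ∧ ∀ P ∈ S, ∀ Q ∈ S, sympl P Q = 0} : ℚ)
      = ∏ k ∈ Finset.range m,
          ((4 : ℚ) ^ n / 2 ^ k - 2 ^ k) / ((2 : ℚ) ^ m - 2 ^ k) := by
  have hsub : Nat.card {S : AddSubgroup (V n) //
      Nat.card S = 2 ^ m ∧ ∀ P ∈ S, ∀ Q ∈ S, sympl P Q = 0} =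
        Nat.card ((symplForm n).IsotropicSubspace m) :=
    Nat.card_congr <| (AddSubgroup.toZModSubmodule 2).toEquiv.subtypeEquiv fun S =>
      and_congr (S.natCard_eq_pow_iff_finrank m)
        ⟨fun h Q hQ P hP => h P hP Q hQ, fun h P hP Q hQ => h hQ P hP⟩
  rw [hsub, LinearMap.BilinForm.natCard_isotropicSubspace (symplForm_isAlt n)
    (symplForm_nondegenerate n), finrank_V, ZMod.card, Nat.cast_ofNat]
  refine Finset.prod_congr rfl fun k hk => ?_
  have hk2n : k ≤ 2 * n := by have := Finset.mem_range.1 hk; omega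
  rw [pow_sub₀ _ two_ne_zero hk2n, pow_mul, ← div_eq_mul_inv]
  norm_num
end
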